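/- Let M_1, …, M_{n_w} ∈ ℝ^{n_x × n_z} with n_z = n_x + n_u, W ∈ ℝ^{n_w × n_w} symmetric, E and E* as defined, K ∈ ℝ^{n_u × n_x} a gain with L_K = [I, Kᵀ] and π_K(X) = L_Kᵀ X L_K, and H ∈ ℝ^{n_z × n_z} symmetric. Suppose P ∈ ℝ^{n_x × n_x} is symmetric and satisfies P = L_K (H + E*(P)) L_Kᵀ. Let (X_t)_{t ∈ ℕ} be any sequence of symmetric n_x × n_x matrices satisfying the closed-loop second-moment dynamics X_{t+1} = E(π_K(X_t)). Then for every T ∈ ℕ, Σ_{t=0}^{T} tr[H · π_K(X_t)] = tr[P X_0] − tr[P X_{T+1}]. -/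

import Mathlib

open Matrix BigOperators

/-- The completely positive operator `E(Z) = Σ_{i,j} W i j • M i * Z * (M j)ᵀ`. -/
def cpE {n_w n_x n_u : ℕ} (W : Matrix (Fin n_w) (Fin n_w) ℝ)
    (M : Fin n_w → Matrix (Fin n_x) (Fin n_x ⊕ Fin n_u) ℝ)
    (Z : Matrix (Fin n_x ⊕ Fin n_u) (Fin n_x ⊕ Fin n_u) ℝ) :
    Matrix (Fin n_x) (Fin n_x) ℝ :=
  ∑ i : Fin n_w, ∑ j : Fin n_w, W i j • (M i * Z * (M j)ᵀ)

/-- Its adjoint `E*(P) = Σ_{i,j} W i j • (M i)ᵀ * P * M j`. -/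
def cpEstar {n_w n_x n_u : ℕ} (W : Matrix (Fin n_w) (Fin n_w) ℝ)
    (M : Fin n_w → Matrix (Fin n_x) (Fin n_x ⊕ Fin n_u) ℝ)
    (P : Matrix (Fin n_x) (Fin n_x) ℝ) :
    Matrix (Fin n_x ⊕ Fin n_u) (Fin n_x ⊕ Fin n_u) ℝ :=
  ∑ i : Fin n_w, ∑ j : Fin n_w, W i j • ((M i)ᵀ * P * M j)

/-- The matrix `L_K = [I, Kᵀ]` associated with a gain `K`. -/
def gainL {n_x n_u : ℕ} (K : Matrix (Fin n_u) (Fin n_x) ℝ) :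
    Matrix (Fin n_x) (Fin n_x ⊕ Fin n_u) ℝ :=
  Matrix.fromCols 1 Kᵀ

/-- The policy map `π_K(X) = L_Kᵀ X L_K`. -/
def policy {n_x n_u : ℕ} (K : Matrix (Fin n_u) (Fin n_x) ℝ)
    (X : Matrix (Fin n_x) (Fin n_x) ℝ) :
    Matrix (Fin n_x ⊕ Fin n_u) (Fin n_x ⊕ Fin n_u) ℝ :=
  (gainL K)ᵀ * X * gainL K

/- Along the closed loop the Lyapunov value tr[P Xₜ] drops by exactly the stage cost: by the
Lyapunov equation tr[P Xₜ] = tr[(H + E*(P)) π_K(Xₜ)], and by duality of E and E*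
tr[P Xₜ₊₁] = tr[E*(P) π_K(Xₜ)]. Summing the drops telescopes. -/

theorem trace_mul_cpE {n_w n_x n_u : ℕ}
    {W : Matrix (Fin n_w) (Fin n_w) ℝ} (hW : W.IsSymm)
    (M : Fin n_w → Matrix (Fin n_x) (Fin n_x ⊕ Fin n_u) ℝ)
    (P : Matrix (Fin n_x) (Fin n_x) ℝ)
    (Z : Matrix (Fin n_x ⊕ Fin n_u) (Fin n_x ⊕ Fin n_u) ℝ) :
    (P * cpE W M Z).trace = (cpEstar W M P * Z).trace := by
  simp only [cpE, cpEstar, Finset.mul_sum, Finset.sum_mul, Matrix.mul_smul,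
    Matrix.smul_mul, Matrix.trace_sum, Matrix.trace_smul]
  rw [Finset.sum_comm]
  refine Finset.sum_congr rfl fun j _ => Finset.sum_congr rfl fun i _ => ?_
  rw [hW.apply i j]
  congr 1
  rw [← Matrix.mul_assoc, trace_mul_comm, ← Matrix.mul_assoc, ← Matrix.mul_assoc]

theorem trace_conj_mul {m n R : Type*} [Fintype m] [Fintype n] [CommSemiring R]
    (L : Matrix m n R) (A : Matrix n n R) (X : Matrix m m R) :
    (L * A * Lᵀ * X).trace = (A * (Lᵀ * X * L)).trace := by
  rw [Matrix.mul_assoc, Matrix.mul_assoc, trace_mul_comm, Matrix.mul_assoc, Matrix.mul_assoc]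

theorem trace_mul_policy_eq_sub {n_w n_x n_u : ℕ}
    {W : Matrix (Fin n_w) (Fin n_w) ℝ} (hW : W.IsSymm)
    {M : Fin n_w → Matrix (Fin n_x) (Fin n_x ⊕ Fin n_u) ℝ}
    {K : Matrix (Fin n_u) (Fin n_x) ℝ}
    {H : Matrix (Fin n_x ⊕ Fin n_u) (Fin n_x ⊕ Fin n_u) ℝ}
    {P : Matrix (Fin n_x) (Fin n_x) ℝ}
    (hLyap : P = gainL K * (H + cpEstar W M P) * (gainL K)ᵀ)
    (X : Matrix (Fin n_x) (Fin n_x) ℝ) :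
    (H * policy K X).trace = (P * X).trace - (P * cpE W M (policy K X)).trace := by
  have hPX : (P * X).trace = ((H + cpEstar W M P) * policy K X).trace := by
    conv_lhs => rw [hLyap]
    exact trace_conj_mul _ _ _
  rw [hPX, trace_mul_cpE hW, Matrix.add_mul, Matrix.trace_add, add_sub_cancel_right]

theorem closed_loop_cost_telescope_general (n_w n_x n_u : ℕ)
    (W : Matrix (Fin n_w) (Fin n_w) ℝ) (hW : W.IsSymm)
    (M : Fin n_w → Matrix (Fin n_x) (Fin n_x ⊕ Fin n_u) ℝ)
    (K : Matrix (Fin n_u) (Fin n_x) ℝ)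
    (H : Matrix (Fin n_x ⊕ Fin n_u) (Fin n_x ⊕ Fin n_u) ℝ)
    (P : Matrix (Fin n_x) (Fin n_x) ℝ)
    (hLyap : P = gainL K * (H + cpEstar W M P) * (gainL K)ᵀ)
    (X : ℕ → Matrix (Fin n_x) (Fin n_x) ℝ)
    (hdyn : ∀ t, X (t + 1) = cpE W M (policy K (X t))) :
    ∀ T : ℕ, ∑ t ∈ Finset.range (T + 1), (H * policy K (X t)).trace =
      (P * X 0).trace - (P * X (T + 1)).trace := by
  intro T
  have hdrop : ∀ t, (H * policy K (X t)).trace = (P * X t).trace - (P * X (t + 1)).trace :=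
    fun t => by rw [hdyn t]; exact trace_mul_policy_eq_sub hW hLyap (X t)
  simp only [hdrop]
  exact Finset.sum_range_sub' (fun t => (P * X t).trace) (T + 1)

/-- Telescoping identity: if `P` solves the Lyapunov equation
`P = L_K (H + E*(P)) L_Kᵀ` and `X_{t+1} = E(π_K(X_t))`, then for every `T`,
`Σ_{t=0}^{T} tr[H π_K(X_t)] = tr[P X_0] − tr[P X_{T+1}]`. -/
theorem closed_loop_cost_telescope (n_w n_x n_u : ℕ)
    (W : Matrix (Fin n_w) (Fin n_w) ℝ) (hW : W.IsSymm)
    (M : Fin n_w → Matrix (Fin n_x) (Fin n_x ⊕ Fin n_u) ℝ)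
    (K : Matrix (Fin n_u) (Fin n_x) ℝ)
    (H : Matrix (Fin n_x ⊕ Fin n_u) (Fin n_x ⊕ Fin n_u) ℝ) (hH : H.IsSymm)
    (P : Matrix (Fin n_x) (Fin n_x) ℝ) (hP : P.IsSymm)
    (hLyap : P = gainL K * (H + cpEstar W M P) * (gainL K)ᵀ)
    (X : ℕ → Matrix (Fin n_x) (Fin n_x) ℝ) (hXsymm : ∀ t, (X t).IsSymm)
    (hdyn : ∀ t, X (t + 1) = cpE W M (policy K (X t))) :
    ∀ T : ℕ, ∑ t ∈ Finset.range (T + 1), (H * policy K (X t)).trace =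
      (P * X 0).trace - (P * X (T + 1)).trace :=
  closed_loop_cost_telescope_general n_w n_x n_u W hW M K H P hLyap X hdyn
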